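/- Let C ∈ ℝ^{n₁×n₂×n₃} and D ∈ ℝ^{n₁×l×n₃}, and fix an initial tensor X₁ ∈ ℝ^{n₂×l×n₃}. The tensor equation C⋆X = D is inconsistent (has no solution) if and only if there exists an index k at which the iterates of Algorithm 2 are defined with R_k ≠ 0 but Q_k = 0. -/

import Mathlib

open Matrix Filter Topology

noncomputable section

/-- A third-order real tensor of size `n₁ × n₂ × n₃`, identified with the family of its
frontal slices indexed by `ZMod n₃`. -/
abbrev Tensor (n₁ n₂ n₃ : ℕ) := ZMod n₃ → Matrix (Fin n₁) (Fin n₂) ℝ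

/-- The T-product of third-order tensors: `(C ⋆ D)(k) = ∑ j, C (k - j) * D j`. -/
def tProd {n₁ n₂ l n₃ : ℕ} [NeZero n₃] (C : Tensor n₁ n₂ n₃) (D : Tensor n₂ l n₃) :
    Tensor n₁ l n₃ :=
  fun k => ∑ j : ZMod n₃, C (k - j) * D j

/-- The tensor transpose: `(Cᵀ)(k) = (C (-k))ᵀ`. -/
def tTrans {n₁ n₂ n₃ : ℕ} (C : Tensor n₁ n₂ n₃) : Tensor n₂ n₁ n₃ :=
  fun k => (C (-k))ᵀ

/-- The matrix trace of the first frontal slice of a tensor with square slices. -/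
def trFirst {m n₃ : ℕ} (S : Tensor m m n₃) : ℝ :=
  (S 0).trace

/-- The inner product `⟨C, D⟩ = ∑ k i j, C k i j * D k i j`. -/
def tInner {n₁ n₂ n₃ : ℕ} [NeZero n₃] (C D : Tensor n₁ n₂ n₃) : ℝ :=
  ∑ k : ZMod n₃, ∑ i : Fin n₁, ∑ j : Fin n₂, C k i j * D k i j

/-- The Frobenius norm `‖C‖ = √⟨C, C⟩`. -/
def tNorm {n₁ n₂ n₃ : ℕ} [NeZero n₃] (C : Tensor n₁ n₂ n₃) : ℝ :=
  Real.sqrt (tInner C C)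

/-- The block circulant matrix of a tensor: its `(k, l)` block is `C (k - l)`. -/
def bCirc {n n₃ : ℕ} [NeZero n₃] (C : Tensor n n n₃) :
    Matrix (ZMod n₃ × Fin n) (ZMod n₃ × Fin n) ℝ :=
  fun p q => C (p.1 - q.1) p.2 q.2

/-- `C` is T-symmetric positive definite: `Cᵀ = C` and `bCirc C` is positive definite. -/
def TSymPD {n n₃ : ℕ} [NeZero n₃] (C : Tensor n n n₃) : Prop :=
  tTrans C = C ∧ (bCirc C).PosDef


/-! Write `αₖ = ‖Rₖ‖²/‖Qₖ‖²`, so that `Rₖ₊₁ = Rₖ - αₖ C⋆Qₖ`.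
If `C⋆Xs = D`, then `C⋆(Xs - Xₖ) = Rₖ`, hence `⟨Pₖ, Xs - Xₖ⟩ = ‖Rₖ‖²`; the step length `αₖ`
makes `Qₖ` orthogonal to the new error `Xs - Xₖ₊₁`, so `⟨Qₖ, Xs - Xₖ⟩ = ‖Rₖ‖²` for as long as the
iteration does not break down, and `Qₖ = 0` forces `Rₖ = 0`. Conversely, if the equation is
inconsistent then no residual vanishes; while no `Qₖ` vanishes either, the residuals are pairwise
orthogonal and so are the directions `Qₖ`, which is impossible for infinitely many nonzero tensors
in a finite-dimensional space. -/

section TensorInner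

variable {a b c n₃ : ℕ} [NeZero n₃]

lemma tInner_eq_sum_trace (A B : Tensor a b n₃) :
    tInner A B = ∑ k : ZMod n₃, ((A k)ᵀ * B k).trace := by
  refine Finset.sum_congr rfl fun k _ => ?_
  simp only [Matrix.trace, Matrix.diag, Matrix.mul_apply, Matrix.transpose_apply]
  rw [Finset.sum_comm]

lemma tInner_comm (A B : Tensor a b n₃) : tInner A B = tInner B A := by
  simp [tInner, mul_comm]

lemma tInner_add_left (A B Z : Tensor a b n₃) :
    tInner (A + B) Z = tInner A Z + tInner B Z := by
  simp [tInner, add_mul, Finset.sum_add_distrib]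

lemma tInner_sub_left (A B Z : Tensor a b n₃) :
    tInner (A - B) Z = tInner A Z - tInner B Z := by
  simp [tInner, sub_mul, Finset.sum_sub_distrib]

lemma tInner_smul_left (r : ℝ) (A Z : Tensor a b n₃) :
    tInner (r • A) Z = r * tInner A Z := by
  simp [tInner, Finset.mul_sum, mul_assoc]

lemma tInner_zero_left (Z : Tensor a b n₃) : tInner 0 Z = 0 := by
  simp [tInner]

lemma tInner_add_right (Z A B : Tensor a b n₃) :
    tInner Z (A + B) = tInner Z A + tInner Z B := by
  rw [tInner_comm, tInner_add_left, tInner_comm A, tInner_comm B]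

lemma tInner_sub_right (Z A B : Tensor a b n₃) :
    tInner Z (A - B) = tInner Z A - tInner Z B := by
  rw [tInner_comm, tInner_sub_left, tInner_comm A, tInner_comm B]

lemma tInner_smul_right (r : ℝ) (Z A : Tensor a b n₃) :
    tInner Z (r • A) = r * tInner Z A := by
  rw [tInner_comm, tInner_smul_left, tInner_comm A]

lemma tInner_self_eq_zero {A : Tensor a b n₃} : tInner A A = 0 ↔ A = 0 := by
  refine ⟨fun h => ?_, fun h => h ▸ tInner_zero_left 0⟩
  have row_nonneg : ∀ k i, 0 ≤ ∑ j, A k i j * A k i j := fun k i =>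
    Finset.sum_nonneg fun j _ => mul_self_nonneg _
  funext k
  ext i j
  have hk := (Finset.sum_eq_zero_iff_of_nonneg fun k _ =>
    Finset.sum_nonneg fun i _ => row_nonneg k i).1 h k (Finset.mem_univ _)
  have hki := (Finset.sum_eq_zero_iff_of_nonneg fun i _ => row_nonneg k i).1 hk i
    (Finset.mem_univ _)
  exact mul_self_eq_zero.1 <|
    (Finset.sum_eq_zero_iff_of_nonneg fun j _ => mul_self_nonneg _).1 hki j (Finset.mem_univ _)

lemma tInner_self_ne_zero {A : Tensor a b n₃} (h : A ≠ 0) : tInner A A ≠ 0 :=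
  mt tInner_self_eq_zero.mp h

def tInnerForm : LinearMap.BilinForm ℝ (Tensor a b n₃) :=
  LinearMap.mk₂ ℝ tInner tInner_add_left tInner_smul_left tInner_add_right tInner_smul_right

lemma exists_eq_zero_of_pairwise_tInner_eq_zero {ι : Type*} [Infinite ι] (v : ι → Tensor a b n₃)
    (hv : Pairwise fun i j => tInner (v i) (v j) = 0) : ∃ i, v i = 0 := by
  by_contra! hne
  exact Module.Finite.not_linearIndependent_of_infinite _ <|
    LinearMap.BilinForm.linearIndependent_of_iIsOrtho (B := tInnerForm) (fun _ _ hij => hv hij)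
      fun i => tInner_self_ne_zero (hne i)

lemma tProd_add (C : Tensor a b n₃) (X Y : Tensor b c n₃) :
    tProd C (X + Y) = tProd C X + tProd C Y := by
  funext k
  simp [tProd, Matrix.mul_add, Finset.sum_add_distrib]

lemma tProd_sub (C : Tensor a b n₃) (X Y : Tensor b c n₃) :
    tProd C (X - Y) = tProd C X - tProd C Y := by
  funext k
  simp [tProd, Matrix.mul_sub, Finset.sum_sub_distrib]

lemma tProd_smul (C : Tensor a b n₃) (r : ℝ) (X : Tensor b c n₃) :
    tProd C (r • X) = r • tProd C X := by
  funext k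
  simp [tProd, Matrix.mul_smul, Finset.smul_sum]

lemma tInner_tProd_left (C : Tensor a b n₃) (Y : Tensor b c n₃) (Z : Tensor a c n₃) :
    tInner (tProd C Y) Z = tInner Y (tProd (tTrans C) Z) := by
  have hC : ∀ k m : ZMod n₃, tTrans C (m - k) = (C (k - m))ᵀ := fun k m => by
    simp [tTrans, neg_sub]
  simp only [tInner_eq_sum_trace, tProd, hC, Matrix.transpose_sum, Matrix.sum_mul, Matrix.mul_sum,
    Matrix.trace_sum, Matrix.transpose_mul, Matrix.mul_assoc]
  exact Finset.sum_comm

lemma trFirst_tProd_tTrans (A B : Tensor a b n₃) :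
    trFirst (tProd (tTrans A) B) = tInner A B := by
  simp [tInner_eq_sum_trace, trFirst, tProd, tTrans, Matrix.trace_sum]

end TensorInner

structure IsAlgorithm2Iterates {n₁ n₂ l n₃ : ℕ} [NeZero n₃] (C : Tensor n₁ n₂ n₃)
    (D : Tensor n₁ l n₃) (X : ℕ → Tensor n₂ l n₃) (R : ℕ → Tensor n₁ l n₃)
    (P Q : ℕ → Tensor n₂ l n₃) : Prop where
  R_eq : ∀ i, 1 ≤ i → R i = D - tProd C (X i)
  P_eq : ∀ i, 1 ≤ i → P i = tProd (tTrans C) (R i)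
  Q_one : Q 1 = P 1
  X_succ : ∀ i, 1 ≤ i → X (i + 1) = X i + (tInner (R i) (R i) / tInner (Q i) (Q i)) • Q i
  Q_succ : ∀ i, 1 ≤ i → Q (i + 1) = P (i + 1) -
    (trFirst (tProd (tTrans (P (i + 1))) (Q i)) / tInner (Q i) (Q i)) • Q i

namespace IsAlgorithm2Iterates

variable {n₁ n₂ l n₃ : ℕ} [NeZero n₃] {C : Tensor n₁ n₂ n₃} {D : Tensor n₁ l n₃}
  {X : ℕ → Tensor n₂ l n₃} {R : ℕ → Tensor n₁ l n₃} {P Q : ℕ → Tensor n₂ l n₃}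
  {i j : ℕ}

lemma R_succ (h : IsAlgorithm2Iterates C D X R P Q) (hi : 1 ≤ i) :
    R (i + 1) = R i - (tInner (R i) (R i) / tInner (Q i) (Q i)) • tProd C (Q i) := by
  rw [h.R_eq (i + 1) (by omega), h.X_succ i hi, tProd_add, tProd_smul, h.R_eq i hi,
    sub_add_eq_sub_sub]

lemma P_succ (h : IsAlgorithm2Iterates C D X R P Q) (hi : 1 ≤ i) :
    P (i + 1) = Q (i + 1) + (tInner (P (i + 1)) (Q i) / tInner (Q i) (Q i)) • Q i := by
  rw [h.Q_succ i hi, trFirst_tProd_tTrans, sub_add_cancel]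

lemma tProd_sub_X {Xs : Tensor n₂ l n₃} (h : IsAlgorithm2Iterates C D X R P Q)
    (hXs : tProd C Xs = D) (hi : 1 ≤ i) : tProd C (Xs - X i) = R i := by
  rw [tProd_sub, hXs, h.R_eq i hi]

lemma tInner_Q_sub_X {Xs : Tensor n₂ l n₃} (h : IsAlgorithm2Iterates C D X R P Q)
    (hXs : tProd C Xs = D) (hi : 1 ≤ i) (hQ : ∀ j, 1 ≤ j → j < i → Q j ≠ 0) :
    tInner (Q i) (Xs - X i) = tInner (R i) (R i) := by
  have hP : ∀ j, 1 ≤ j → tInner (P j) (Xs - X j) = tInner (R j) (R j) := fun j hj => by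
    rw [h.P_eq j hj, tInner_comm, ← tInner_tProd_left, h.tProd_sub_X hXs hj]
  induction i, hi using Nat.le_induction with
  | base => rw [h.Q_one, hP 1 le_rfl]
  | succ i hi ih =>
    have hQQ := tInner_self_ne_zero (hQ i hi (by omega))
    have herr : tInner (Q i) (Xs - X (i + 1)) = 0 := by
      rw [h.X_succ i hi, sub_add_eq_sub_sub, tInner_sub_right, tInner_smul_right,
        ih fun j hj hji => hQ j hj (by omega), div_mul_cancel₀ _ hQQ, sub_self]
    rw [h.Q_succ i hi, tInner_sub_left, tInner_smul_left, hP (i + 1) (by omega), herr, mul_zero,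
      sub_zero]

lemma R_eq_zero_of_Q_eq_zero {Xs : Tensor n₂ l n₃} (h : IsAlgorithm2Iterates C D X R P Q)
    (hXs : tProd C Xs = D) (hi : 1 ≤ i) (hQ : ∀ j, 1 ≤ j → j < i → Q j ≠ 0) (hQi : Q i = 0) :
    R i = 0 := by
  have := h.tInner_Q_sub_X hXs hi hQ
  rwa [hQi, tInner_zero_left, eq_comm, tInner_self_eq_zero] at this

lemma tInner_Q_P (h : IsAlgorithm2Iterates C D X R P Q)
    (hQQ : ∀ j, 1 ≤ j → j < i → tInner (Q i) (Q j) = 0) (hj : 1 ≤ j) (hji : j ≤ i) :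
    tInner (Q i) (P j) = tInner (Q i) (Q j) := by
  obtain rfl | ⟨m, hm, rfl⟩ : j = 1 ∨ ∃ m, 1 ≤ m ∧ j = m + 1 :=
    (eq_or_lt_of_le hj).elim (fun h => .inl h.symm) fun h => .inr ⟨j - 1, by omega, by omega⟩
  · rw [h.Q_one]
  · rw [h.P_succ hm, tInner_add_right, tInner_smul_right, hQQ m hm (by omega), mul_zero, add_zero]

lemma tInner_tProd_Q_eq_zero {Z : Tensor n₁ l n₃} (h : IsAlgorithm2Iterates C D X R P Q)
    (hj : 1 ≤ j) (hRj : R j ≠ 0) (hQj : Q j ≠ 0)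
    (hZj : tInner (R j) Z = 0) (hZj' : tInner (R (j + 1)) Z = 0) :
    tInner (tProd C (Q j)) Z = 0 := by
  have hα : tInner (R j) (R j) / tInner (Q j) (Q j) ≠ 0 :=
    div_ne_zero (tInner_self_ne_zero hRj) (tInner_self_ne_zero hQj)
  have hstep : (tInner (R j) (R j) / tInner (Q j) (Q j)) • tProd C (Q j) = R j - R (j + 1) := by
    rw [h.R_succ hj, sub_sub_cancel]
  have := tInner_smul_left (tInner (R j) (R j) / tInner (Q j) (Q j)) (tProd C (Q j)) Z
  rw [hstep, tInner_sub_left, hZj, hZj', sub_self, eq_comm] at this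
  exact (mul_eq_zero.1 this).resolve_left hα

lemma tInner_R_succ_eq_zero (h : IsAlgorithm2Iterates C D X R P Q)
    (hQ : ∀ j, 1 ≤ j → Q j ≠ 0) (hi : 1 ≤ i)
    (hRR : ∀ j, 1 ≤ j → j < i → tInner (R i) (R j) = 0)
    (hQQ : ∀ j, 1 ≤ j → j < i → tInner (Q i) (Q j) = 0) :
    ∀ j, 1 ≤ j → j ≤ i → tInner (R (i + 1)) (R j) = 0 := by
  intro j hj hji
  rw [h.R_succ hi, tInner_sub_left, tInner_smul_left, tInner_tProd_left, ← h.P_eq j hj,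
    h.tInner_Q_P hQQ hj hji]
  rcases eq_or_lt_of_le hji with rfl | hlt
  · rw [div_mul_cancel₀ _ (tInner_self_ne_zero (hQ j hj)), sub_self]
  · rw [hRR j hj hlt, hQQ j hj hlt, mul_zero, sub_self]

lemma tInner_Q_succ_eq_zero (h : IsAlgorithm2Iterates C D X R P Q)
    (hR : ∀ j, 1 ≤ j → R j ≠ 0) (hQ : ∀ j, 1 ≤ j → Q j ≠ 0) (hi : 1 ≤ i)
    (hQQ : ∀ j, 1 ≤ j → j < i → tInner (Q i) (Q j) = 0)
    (hRR : ∀ j, 1 ≤ j → j ≤ i → tInner (R (i + 1)) (R j) = 0) :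
    ∀ j, 1 ≤ j → j ≤ i → tInner (Q (i + 1)) (Q j) = 0 := by
  intro j hj hji
  rw [h.Q_succ i hi, tInner_sub_left, tInner_smul_left, trFirst_tProd_tTrans]
  rcases eq_or_lt_of_le hji with rfl | hlt
  · rw [div_mul_cancel₀ _ (tInner_self_ne_zero (hQ j hj)), sub_self]
  · rw [hQQ j hj hlt, mul_zero, sub_zero, h.P_eq (i + 1) (by omega), tInner_comm,
      ← tInner_tProd_left]
    refine h.tInner_tProd_Q_eq_zero hj (hR j hj) (hQ j hj) ?_ ?_
    · rw [tInner_comm, hRR j hj hji]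
    · rw [tInner_comm, hRR (j + 1) (by omega) hlt]

lemma tInner_eq_zero_of_lt (h : IsAlgorithm2Iterates C D X R P Q)
    (hR : ∀ j, 1 ≤ j → R j ≠ 0) (hQ : ∀ j, 1 ≤ j → Q j ≠ 0) :
    ∀ i j, 1 ≤ j → j < i → tInner (R i) (R j) = 0 ∧ tInner (Q i) (Q j) = 0 := by
  intro i
  induction i with
  | zero => intro j _ hj; omega
  | succ i ih =>
    intro j hj hji
    have hi : 1 ≤ i := by omega
    have hRR := h.tInner_R_succ_eq_zero hQ hi (fun j hj hji => (ih j hj hji).1)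
      (fun j hj hji => (ih j hj hji).2)
    exact ⟨hRR j hj (by omega), h.tInner_Q_succ_eq_zero hR hQ hi
      (fun j hj hji => (ih j hj hji).2) hRR j hj (by omega)⟩

lemma R_ne_zero (h : IsAlgorithm2Iterates C D X R P Q)
    (hD : ¬ ∃ Xs : Tensor n₂ l n₃, tProd C Xs = D) (hi : 1 ≤ i) : R i ≠ 0 := fun hRi =>
  hD ⟨X i, (sub_eq_zero.1 ((h.R_eq i hi).symm.trans hRi)).symm⟩

lemma exists_first_Q_eq_zero (h : IsAlgorithm2Iterates C D X R P Q)
    (hR : ∀ j, 1 ≤ j → R j ≠ 0) :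
    ∃ k, 1 ≤ k ∧ (∀ j, 1 ≤ j → j < k → Q j ≠ 0) ∧ Q k = 0 := by
  classical
  have hex : ∃ k, 1 ≤ k ∧ Q k = 0 := by
    by_contra! hQ
    have horth := h.tInner_eq_zero_of_lt hR hQ
    obtain ⟨k, hk⟩ := exists_eq_zero_of_pairwise_tInner_eq_zero (fun n => Q (n + 1))
      fun m n hmn => by
        change tInner (Q (m + 1)) (Q (n + 1)) = 0
        rcases lt_or_gt_of_ne hmn with hlt | hlt
        · rw [tInner_comm]
          exact (horth _ _ (by omega) (by omega)).2
        · exact (horth _ _ (by omega) (by omega)).2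
    exact hQ (k + 1) (by omega) hk
  exact ⟨Nat.find hex, (Nat.find_spec hex).1, fun j hj hjk hQj => Nat.find_min hex hjk ⟨hj, hQj⟩,
    (Nat.find_spec hex).2⟩

end IsAlgorithm2Iterates

theorem stmt_11 (n₁ n₂ l n₃ : ℕ) [NeZero n₃] (C : Tensor n₁ n₂ n₃)
    (D : Tensor n₁ l n₃)
    (X : ℕ → Tensor n₂ l n₃) (R : ℕ → Tensor n₁ l n₃)
    (P Q : ℕ → Tensor n₂ l n₃)
    (hR : ∀ i, 1 ≤ i → R i = D - tProd C (X i))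
    (hP : ∀ i, 1 ≤ i → P i = tProd (tTrans C) (R i))
    (hQ1 : Q 1 = P 1)
    (hX : ∀ i, 1 ≤ i → X (i + 1) = X i +
      (tInner (R i) (R i) / tInner (Q i) (Q i)) • Q i)
    (hQ : ∀ i, 1 ≤ i → Q (i + 1) = P (i + 1) -
      (trFirst (tProd (tTrans (P (i + 1))) (Q i)) / tInner (Q i) (Q i)) • Q i)
    :
    (¬ ∃ Xs : Tensor n₂ l n₃, tProd C Xs = D) ↔
      ∃ k, 1 ≤ k ∧ (∀ j, 1 ≤ j → j < k → Q j ≠ 0) ∧ R k ≠ 0 ∧ Q k = 0 := by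
  have h : IsAlgorithm2Iterates C D X R P Q := ⟨hR, hP, hQ1, hX, hQ⟩
  constructor
  · intro hD
    obtain ⟨k, hk, hQ, hQk⟩ := h.exists_first_Q_eq_zero fun j hj => h.R_ne_zero hD hj
    exact ⟨k, hk, hQ, h.R_ne_zero hD hk, hQk⟩
  · rintro ⟨k, hk, hQ, hRk, hQk⟩ ⟨Xs, hXs⟩
    exact hRk (h.R_eq_zero_of_Q_eq_zero hXs hk hQ hQk)
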